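/- arXiv:2402.02012 — 2 statements merged into one kernel-verified Lean document; each statement's English description precedes it below -/
import Mathlib

section
/- Let K ≥ 1 be a natural number, M ≥ 0, and ψ, κ : ℕ → ℝ with |ψ i| ≤ M and |κ i| ≤ M for all i. Define e : ℕ → ℝ by e 0 = 0 and e (i+1) = e i · (1 − ψ i / K) + κ i / K. Then | e K − (1/K)·∑_{i=0}^{K−1} κ i + (1/K²)·∑_{i=0}^{K−1} κ i · (∑_{j=i+1}^{K−1} ψ j) | ≤ M³ · exp M / 2. -/
open Real Finset

lemma exp_taylor2 (s : ℝ) (hs : 0 ≤ s) : Real.exp s - 1 - s ≤ s ^ 2 / 2 * Real.exp s := by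
  set f : ℝ → ℝ := fun t => t ^ 2 / 2 * Real.exp t - Real.exp t + t with hf
  have hderiv : ∀ t : ℝ, HasDerivAt f (t * Real.exp t + t ^ 2 / 2 * Real.exp t - Real.exp t + 1) t := by
    intro t
    have h1 : HasDerivAt (fun t : ℝ => t ^ 2 / 2) t t := by
      have := (hasDerivAt_pow 2 t).div_const 2
      simpa using this
    have h2 := h1.mul (Real.hasDerivAt_exp t)
    have h3 := (h2.sub (Real.hasDerivAt_exp t)).add (hasDerivAt_id t)
    exact h3
  have hmono : MonotoneOn f (Set.Ici (0:ℝ)) := by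
    apply monotoneOn_of_deriv_nonneg (convex_Ici 0)
    · exact Continuous.continuousOn (by fun_prop)
    · intro t ht
      exact (hderiv t).differentiableAt.differentiableWithinAt
    · intro t ht
      rw [(hderiv t).deriv]
      rw [interior_Ici] at ht
      have ht' : (0:ℝ) < t := ht
      have h1 : (1 - t) * Real.exp t ≤ 1 := by
        have h2 := Real.add_one_le_exp (-t)
        have h3 : Real.exp (-t) * Real.exp t = 1 := by rw [← Real.exp_add]; simp
        nlinarith [Real.exp_pos t]
      nlinarith [Real.exp_pos t, sq_nonneg t]
  have := hmono (Set.self_mem_Ici) (Set.mem_Ici.mpr hs) hs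
  simp only [hf] at this
  norm_num at this
  nlinarith [this]

lemma prod_sum_est (x : ℕ → ℝ) (s : Finset ℕ) :
    |∏ j ∈ s, (1 + x j) - 1 - ∑ j ∈ s, x j|
      ≤ Real.exp (∑ j ∈ s, |x j|) - 1 - ∑ j ∈ s, |x j| := by
  induction s using Finset.cons_induction with
  | empty => simp
  | cons a s ha ih =>
    set P := ∏ j ∈ s, (1 + x j) with hPdef
    set Sg := ∑ j ∈ s, x j with hSgdef
    set S := ∑ j ∈ s, |x j| with hSdef0
    have hS0 : 0 ≤ S := Finset.sum_nonneg fun j _ => abs_nonneg _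
    have hSgS : |Sg| ≤ S := Finset.abs_sum_le_sum_abs _ _
    have hP1 : |P - 1| ≤ Real.exp S - 1 := by
      have : |P - 1| ≤ |P - 1 - Sg| + |Sg| := by
        calc |P - 1| = |(P - 1 - Sg) + Sg| := by ring_nf
        _ ≤ |P - 1 - Sg| + |Sg| := abs_add_le _ _
      linarith
    rw [Finset.prod_cons, Finset.sum_cons, Finset.sum_cons]
    have key : (1 + x a) * P - 1 - (x a + Sg) = (P - 1 - Sg) + x a * (P - 1) := by ring
    have step1 : |(1 + x a) * P - 1 - (x a + Sg)| ≤ |P - 1 - Sg| + |x a| * |P - 1| := by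
      rw [key]
      calc |(P - 1 - Sg) + x a * (P - 1)| ≤ |P - 1 - Sg| + |x a * (P - 1)| := abs_add_le _ _
      _ = |P - 1 - Sg| + |x a| * |P - 1| := by rw [abs_mul]
    have step2 : |P - 1 - Sg| + |x a| * |P - 1| ≤ (Real.exp S - 1 - S) + |x a| * (Real.exp S - 1) :=
      add_le_add ih (mul_le_mul_of_nonneg_left hP1 (abs_nonneg _))
    have step3 : (Real.exp S - 1 - S) + |x a| * (Real.exp S - 1)
        ≤ Real.exp (|x a| + S) - 1 - (|x a| + S) := by
      have h1 := Real.add_one_le_exp (|x a|)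
      have h2 : Real.exp (|x a| + S) = Real.exp (|x a|) * Real.exp S := Real.exp_add _ _
      nlinarith [Real.exp_pos S, abs_nonneg (x a)]
    linarith

/-- Second-order expansion of the accumulated Euler-sampling error:
if `|ψ i| ≤ M` and `|κ i| ≤ M` for all `i`, and `e` satisfies
`e 0 = 0`, `e (i+1) = e i * (1 - ψ i / K) + κ i / K`, then
`| e K - (1/K) ∑_{i<K} κ i + (1/K²) ∑_{i<K} κ i (∑_{j=i+1}^{K-1} ψ j) |
  ≤ M³ exp M / 2`. -/
theorem error_recursion_second_order (K : ℕ) (hK : 1 ≤ K) (M : ℝ) (hM : 0 ≤ M)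
    (ψ κ : ℕ → ℝ) (hψ : ∀ i, |ψ i| ≤ M) (hκ : ∀ i, |κ i| ≤ M)
    (e : ℕ → ℝ) (h0 : e 0 = 0)
    (hrec : ∀ i, e (i + 1) = e i * (1 - ψ i / K) + κ i / K) :
    |e K - (1 / K) * ∑ i ∈ Finset.range K, κ i
      + (1 / K ^ 2) * ∑ i ∈ Finset.range K,
          κ i * ∑ j ∈ Finset.Ico (i + 1) K, ψ j|
      ≤ M ^ 3 * Real.exp M / 2 := by
  have hK0 : (0:ℝ) < K := by exact_mod_cast Nat.lt_of_lt_of_le Nat.zero_lt_one hK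
  have closed : ∀ n, e n = (1/(K:ℝ)) * ∑ i ∈ Finset.range n,
      κ i * ∏ j ∈ Finset.Ico (i+1) n, (1 - ψ j / K) := by
    intro n
    induction n with
    | zero => simp [h0]
    | succ n ih =>
      rw [hrec n, ih, Finset.sum_range_succ]
      have hcong : ∀ i ∈ Finset.range n,
          κ i * ∏ j ∈ Finset.Ico (i+1) (n+1), (1 - ψ j / K)
            = (κ i * ∏ j ∈ Finset.Ico (i+1) n, (1 - ψ j / K)) * (1 - ψ n / K) := by
        intro i hi
        rw [Finset.prod_Ico_succ_top (Nat.succ_le_of_lt (Finset.mem_range.mp hi))]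
        ring
      rw [Finset.sum_congr rfl hcong, ← Finset.sum_mul]
      simp only [Finset.Ico_self, Finset.prod_empty, mul_one]
      ring
  -- rewrite the goal expression
  have hconv : ∀ j, (1:ℝ) - ψ j / K = 1 + (-ψ j / K) := fun j => by ring
  have hrw : e K - (1 / K) * ∑ i ∈ Finset.range K, κ i
      + (1 / K ^ 2) * ∑ i ∈ Finset.range K, κ i * ∑ j ∈ Finset.Ico (i + 1) K, ψ j
      = ∑ i ∈ Finset.range K, (1/(K:ℝ)) * κ i *
          (∏ j ∈ Finset.Ico (i+1) K, (1 + (-ψ j / K)) - 1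
            - ∑ j ∈ Finset.Ico (i+1) K, (-ψ j / K)) := by
    rw [closed K]
    simp only [hconv]
    rw [Finset.mul_sum, Finset.mul_sum, Finset.mul_sum, ← Finset.sum_sub_distrib,
      ← Finset.sum_add_distrib]
    refine Finset.sum_congr rfl fun i _ => ?_
    have hx : ∑ j ∈ Finset.Ico (i+1) K, (-ψ j / (K:ℝ))
        = -(∑ j ∈ Finset.Ico (i+1) K, ψ j) / K := by
      rw [← Finset.sum_div, ← Finset.sum_neg_distrib]
    rw [hx]
    field_simp
    ring
  rw [hrw]
  have hbound : ∀ i ∈ Finset.range K, |(1/(K:ℝ)) * κ i *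
      (∏ j ∈ Finset.Ico (i+1) K, (1 + (-ψ j / K)) - 1
        - ∑ j ∈ Finset.Ico (i+1) K, (-ψ j / K))|
      ≤ (1/(K:ℝ)) * (M ^ 3 * Real.exp M / 2) := by
    intro i _
    set S := ∑ j ∈ Finset.Ico (i+1) K, |(-ψ j / (K:ℝ))| with hSdef
    have hS0 : 0 ≤ S := Finset.sum_nonneg fun j _ => abs_nonneg _
    have hSM : S ≤ M := by
      have h1 : ∀ j ∈ Finset.Ico (i+1) K, |(-ψ j / (K:ℝ))| ≤ M / K := by
        intro j _
        rw [abs_div, abs_neg, abs_of_pos hK0]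
        gcongr
        exact hψ j
      calc S ≤ (Finset.Ico (i+1) K).card • (M / K) := Finset.sum_le_card_nsmul _ _ _ h1
      _ = ((Finset.Ico (i+1) K).card : ℝ) * (M / K) := by rw [nsmul_eq_mul]
      _ ≤ (K : ℝ) * (M / K) := by
          apply mul_le_mul_of_nonneg_right _ (div_nonneg hM hK0.le)
          exact_mod_cast le_trans (Nat.card_Ico (i+1) K ▸ Nat.sub_le K (i+1)) le_rfl
      _ = M := by field_simp
    have h1 := prod_sum_est (fun j => -ψ j / K) (Finset.Ico (i+1) K)
    have h2 := exp_taylor2 S hS0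
    have h3 : S ^ 2 / 2 * Real.exp S ≤ M ^ 2 / 2 * Real.exp M := by
      have hE := Real.exp_le_exp.mpr hSM
      have := mul_le_mul (pow_le_pow_left₀ hS0 hSM 2) hE (Real.exp_pos S).le (by positivity)
      linarith
    rw [abs_mul, abs_mul, abs_of_pos (by positivity : (0:ℝ) < 1/(K:ℝ))]
    have hT : |∏ j ∈ Finset.Ico (i+1) K, (1 + (-ψ j / (K:ℝ))) - 1
        - ∑ j ∈ Finset.Ico (i+1) K, (-ψ j / K)| ≤ M ^ 2 / 2 * Real.exp M := by
      refine h1.trans ?_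
      rw [← hSdef]
      linarith
    calc 1/(K:ℝ) * |κ i| * |∏ j ∈ Finset.Ico (i+1) K, (1 + (-ψ j / (K:ℝ))) - 1
        - ∑ j ∈ Finset.Ico (i+1) K, (-ψ j / K)|
        ≤ 1/(K:ℝ) * M * (M ^ 2 / 2 * Real.exp M) := by
          apply mul_le_mul _ hT (abs_nonneg _) (by positivity)
          exact mul_le_mul_of_nonneg_left (hκ i) (by positivity)
    _ = (1/(K:ℝ)) * (M ^ 3 * Real.exp M / 2) := by ring
  calc |∑ i ∈ Finset.range K, (1/(K:ℝ)) * κ i *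
      (∏ j ∈ Finset.Ico (i+1) K, (1 + (-ψ j / K)) - 1
        - ∑ j ∈ Finset.Ico (i+1) K, (-ψ j / K))|
      ≤ ∑ i ∈ Finset.range K, |(1/(K:ℝ)) * κ i *
        (∏ j ∈ Finset.Ico (i+1) K, (1 + (-ψ j / K)) - 1
          - ∑ j ∈ Finset.Ico (i+1) K, (-ψ j / K))| := Finset.abs_sum_le_sum_abs _ _
  _ ≤ ∑ i ∈ Finset.range K, (1/(K:ℝ)) * (M ^ 3 * Real.exp M / 2) :=
      Finset.sum_le_sum hbound
  _ = (K:ℝ) * ((1/(K:ℝ)) * (M ^ 3 * Real.exp M / 2)) := by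
      rw [Finset.sum_const, Finset.card_range, nsmul_eq_mul]
  _ = M ^ 3 * Real.exp M / 2 := by field_simp
end

section
/- Let V be a real vector space, K ≥ 1 a natural number, z₁ ∈ V, and g : V × ℕ → V an arbitrary function. Define the Euler iterates Z : ℕ → V by Z 0 = z₁ and Z (k+1) = Z k − (1/K) • g (Z k, k), and the per-step predictions p k = z₁ − g (Z k, k) for 0 ≤ k < K. Then (1/K) • ∑_{k=0}^{K−1} p k = Z K. -/
/-- FM-KT is an implicit ensemble: the final sample after `K` Euler steps
equals the average of the `K` per-step teacher predictions
`p k = z₁ - g (Z k, k)`. -/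
theorem euler_avg_predictions {V : Type*} [AddCommGroup V] [Module ℝ V]
    (K : ℕ) (hK : 1 ≤ K) (z₁ : V) (g : V × ℕ → V) (Z : ℕ → V)
    (h0 : Z 0 = z₁)
    (hrec : ∀ k, Z (k + 1) = Z k - ((1 : ℝ) / K) • g (Z k, k)) :
    ((1 : ℝ) / K) • ∑ k ∈ Finset.range K, (z₁ - g (Z k, k)) = Z K := by
  have hZ : ∀ n, Z n = z₁ - ((1 : ℝ) / K) • ∑ k ∈ Finset.range n, g (Z k, k) := by
    intro n
    induction n with
    | zero => simp [h0]
    | succ n ih =>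
      rw [hrec, ih, Finset.sum_range_succ, smul_add, sub_sub, ← ih]
  have hK0 : (K : ℝ) ≠ 0 := Nat.cast_ne_zero.mpr (by omega)
  rw [hZ K, Finset.sum_sub_distrib, Finset.sum_const, Finset.card_range, smul_sub,
    ← Nat.cast_smul_eq_nsmul ℝ, smul_smul, one_div, inv_mul_cancel₀ hK0, one_smul]
end
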